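/- arXiv:1812.07233 — 8 statements merged into one kernel-verified Lean document; each statement's English description precedes it below -/
import Mathlib

section
/- Every semi-practical number n with n ≥ 3 is divisible by 12. -/
/-- A positive integer `n` is semi-practical if every integer `x` with `1 < x < n`
can be written as a sum of distinct positive divisors of `n` excluding `1`. -/
def SemiPractical (n : ℕ) : Prop :=
  ∀ x : ℕ, 1 < x → x < n → ∃ S ⊆ n.divisors.erase 1, ∑ d ∈ S, d = x

lemma key_dvd (n x : ℕ) (hx : 2 ≤ x) (hx4 : x ≤ 4) (S : Finset ℕ)
    (hS : S ⊆ n.divisors.erase 1) (hsum : ∑ d ∈ S, d = x) : x ∣ n := by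
  have hmem : ∀ d ∈ S, 2 ≤ d ∧ d ∣ n := by
    intro d hd
    have := hS hd
    rw [Finset.mem_erase, Nat.mem_divisors] at this
    refine ⟨?_, this.2.1⟩
    rcases this with ⟨h1, h2, h3⟩
    have : d ≠ 0 := by rintro rfl; exact h3 (zero_dvd_iff.mp h2)
    omega
  have hcard : S.card ≤ 1 := by
    by_contra hc
    push_neg at hc
    obtain ⟨a, ha, b, hb, hab⟩ := Finset.one_lt_card.mp hc
    have hsub : insert a {b} ⊆ S := by
      intro z hz
      simp only [Finset.mem_insert, Finset.mem_singleton] at hz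
      rcases hz with rfl | rfl <;> assumption
    have hle : ∑ d ∈ insert a {b}, d ≤ ∑ d ∈ S, d :=
      Finset.sum_le_sum_of_subset hsub
    rw [Finset.sum_insert (by simpa using hab), Finset.sum_singleton] at hle
    have ha2 := (hmem a ha).1
    have hb2 := (hmem b hb).1
    omega
  interval_cases hc : S.card
  · rw [Finset.card_eq_zero] at hc
    subst hc
    simp at hsum
    omega
  · obtain ⟨d, rfl⟩ := Finset.card_eq_one.mp hc
    rw [Finset.sum_singleton] at hsum
    subst hsum
    exact (hmem _ (Finset.mem_singleton_self _)).2

/-- Every semi-practical number `n ≥ 3` is divisible by `12`. -/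
theorem stmt_4 (n : ℕ) (hn : 3 ≤ n) (h : SemiPractical n) : 12 ∣ n := by
  obtain ⟨S2, hS2, hsum2⟩ := h 2 (by omega) (by omega)
  have h2 : 2 ∣ n := key_dvd n 2 le_rfl (by omega) S2 hS2 hsum2
  have hn4 : 4 ≤ n := by
    rcases h2 with ⟨k, rfl⟩; omega
  obtain ⟨S3, hS3, hsum3⟩ := h 3 (by omega) (by omega)
  have h3 : 3 ∣ n := key_dvd n 3 (by omega) (by omega) S3 hS3 hsum3
  have hn6 : 6 ≤ n := by
    have h6 : 6 ∣ n := Nat.Coprime.mul_dvd_of_dvd_of_dvd (by norm_num) h2 h3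
    rcases h6 with ⟨k, rfl⟩; omega
  obtain ⟨S4, hS4, hsum4⟩ := h 4 (by omega) (by omega)
  have h4 : 4 ∣ n := key_dvd n 4 (by omega) le_rfl S4 hS4 hsum4
  exact Nat.Coprime.mul_dvd_of_dvd_of_dvd (by norm_num) h4 h3
end

section
/- Let n ≥ 3 be a semi-practical number. Then n is two-layered if and only if σ(n) is odd. -/
/-- A positive integer `n` is two-layered if its positive divisors excluding `1`
can be partitioned into two disjoint subsets with equal sum. -/
def TwoLayered (n : ℕ) : Prop :=
  ∃ A B : Finset ℕ, A ∪ B = n.divisors.erase 1 ∧ Disjoint A B ∧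
    ∑ d ∈ A, d = ∑ d ∈ B, d

set_option linter.unusedSectionVars false

lemma sum_ne_pred (P S : Finset ℕ) (h2 : ∀ e ∈ P, 2 ≤ e) (hS : S ⊆ P) :
    ∑ d ∈ S, d + 1 ≠ ∑ d ∈ P, d := by
  intro heq
  have hsd : ∑ d ∈ P \ S, d + ∑ d ∈ S, d = ∑ d ∈ P, d := Finset.sum_sdiff hS
  have h1 : ∑ d ∈ P \ S, d = 1 := by omega
  obtain ⟨e, he⟩ : (P \ S).Nonempty := by
    rcases (P \ S).eq_empty_or_nonempty with h | h
    · rw [h] at h1; simp at h1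
    · exact h
  have h3 : e ≤ ∑ d ∈ P \ S, d :=
    Finset.single_le_sum (f := fun d => d) (fun i _ => Nat.zero_le i) he
  have h4 := h2 e (Finset.mem_sdiff.mp he).1
  omega

lemma gen_reach (E : Finset ℕ) (h2 : 2 ∈ E) (h3 : 3 ∈ E)
    (hge : ∀ e ∈ E, 2 ≤ e)
    (hkey : ∀ e ∈ E, 4 ≤ e → e + 1 ≤ ∑ d ∈ E.filter (· < e), d ∧
      (e + 2 = ∑ d ∈ E.filter (· < e), d → e + 1 ∈ E)) (b : ℕ) :
    (∀ x, 2 ≤ x → x ≤ ∑ d ∈ E.filter (· < b), d → x + 1 ≠ ∑ d ∈ E.filter (· < b), d →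
      ∃ S ⊆ E.filter (· < b), ∑ d ∈ S, d = x) ∨
    (∃ m ∈ E, b = m + 1 ∧ 4 ≤ m ∧ m + 1 ∈ E ∧ m + 2 = ∑ d ∈ E.filter (· < m), d ∧
      (∀ x, 2 ≤ x → x ≤ ∑ d ∈ E.filter (· < m), d → x + 1 ≠ ∑ d ∈ E.filter (· < m), d →
        ∃ S ⊆ E.filter (· < m), ∑ d ∈ S, d = x)) := by
  induction b using Nat.strong_induction_on with
  | _ b ih =>
  match b with
  | 0 =>
    left
    intro x hx2 hxle _
    have : E.filter (· < 0) = ∅ := by simp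
    rw [this] at hxle; simp at hxle; omega
  | (m + 1) =>
  by_cases hm : m ∈ E
  case neg =>
    have hPP : E.filter (· < m + 1) = E.filter (· < m) := by
      ext e
      simp only [Finset.mem_filter]
      constructor
      · rintro ⟨he, hlt⟩
        have : e ≠ m := fun h => hm (h ▸ he)
        exact ⟨he, by omega⟩
      · rintro ⟨he, hlt⟩; exact ⟨he, by omega⟩
    rcases ih m (by omega) with good | bad
    · left; rw [hPP]; exact good
    · obtain ⟨m₀, hm₀E, hb, _, hm₀1, _, _⟩ := bad
      exact absurd (hb ▸ hm₀1) hm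
  case pos =>
  have hm2 := hge m hm
  have hins : E.filter (· < m + 1) = insert m (E.filter (· < m)) := by
    ext e
    simp only [Finset.mem_filter, Finset.mem_insert]
    constructor
    · rintro ⟨he, hlt⟩
      rcases eq_or_ne e m with h | h
      · exact Or.inl h
      · exact Or.inr ⟨he, by omega⟩
    · rintro (rfl | ⟨he, hlt⟩)
      · exact ⟨hm, by omega⟩
      · exact ⟨he, by omega⟩
  have hnm : m ∉ E.filter (· < m) := by simp
  have hsum : ∑ d ∈ E.filter (· < m + 1), d = m + ∑ d ∈ E.filter (· < m), d := by
    rw [hins, Finset.sum_insert hnm]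
  have hsubP : E.filter (· < m) ⊆ E.filter (· < m + 1) := by
    intro e he
    simp only [Finset.mem_filter] at he ⊢
    exact ⟨he.1, by omega⟩

  -- base cases m = 2, m = 3, then the main inductive step for m ≥ 4
  rcases show m = 2 ∨ m = 3 ∨ 4 ≤ m by omega with rfl | rfl | hm4
  · -- m = 2
    left
    have hP2 : E.filter (· < 2) = ∅ := by
      rw [Finset.filter_eq_empty_iff]
      intro e he
      have := hge e he; omega
    intro x hx2 hxle hxne
    rw [hsum, hP2] at hxle
    simp at hxle
    refine ⟨({2} : Finset ℕ), ?_, by simp; omega⟩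
    intro e he
    simp at he; subst he
    simp only [Finset.mem_filter]
    exact ⟨h2, by omega⟩
  · -- m = 3
    left
    have hP3 : E.filter (· < 3) = {2} := by
      ext e
      simp only [Finset.mem_filter, Finset.mem_singleton]
      constructor
      · rintro ⟨he, hlt⟩
        have := hge e he; omega
      · rintro rfl; exact ⟨h2, by omega⟩
    have h2mem : (2 : ℕ) ∈ E.filter (· < 4) := by
      simp only [Finset.mem_filter]; exact ⟨h2, by omega⟩
    have h3mem : (3 : ℕ) ∈ E.filter (· < 4) := by
      simp only [Finset.mem_filter]; exact ⟨h3, by omega⟩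
    intro x hx2 hxle hxne
    rw [hsum, hP3] at hxle hxne
    simp only [Finset.sum_singleton] at hxle hxne
    rcases show x = 2 ∨ x = 3 ∨ x = 5 by omega with rfl | rfl | rfl
    · exact ⟨{2}, by intro e he; simp at he; subst he; exact h2mem, by simp⟩
    · exact ⟨{3}, by intro e he; simp at he; subst he; exact h3mem, by simp⟩
    · refine ⟨{2, 3}, ?_, by simp⟩
      intro e he
      simp only [Finset.mem_insert, Finset.mem_singleton] at he
      rcases he with rfl | rfl
      · exact h2mem
      · exact h3mem
  · -- m ≥ 4
    obtain ⟨hk1, hk2⟩ := hkey m hm hm4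
    have hmmemP : m ∈ E.filter (· < m + 1) := by
      simp only [Finset.mem_filter]; exact ⟨hm, by omega⟩
    have hsmall : ∀ S ⊆ E.filter (· < m), m ∉ S := by
      intro S hS hmS
      have := hS hmS
      simp only [Finset.mem_filter] at this
      omega
    rcases ih m (by omega) with good | bad
    · -- Good(m)
      set s := ∑ d ∈ E.filter (· < m), d with hs
      by_cases hbadnew : m + 2 = s
      · right
        exact ⟨m, hm, rfl, hm4, hk2 hbadnew, hbadnew, good⟩
      · left
        intro x hx2 hxle hxne
        rw [hsum] at hxle hxne
        rcases show (x ≤ s ∧ x + 1 ≠ s) ∨ x + 1 = s ∨ x = s ∨ (s + 1 ≤ x ∧ x ≤ m + s)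
            by omega with ⟨h1, h2'⟩ | hxs | rfl | ⟨h1, h2'⟩
        · obtain ⟨S, hS, hSsum⟩ := good x hx2 h1 h2'
          exact ⟨S, hS.trans hsubP, hSsum⟩
        · -- x = s - 1
          rcases show x = m ∨ (2 ≤ x - m ∧ x - m ≤ s ∧ (x - m) + 1 ≠ s ∧ m ≤ x)
              by omega with hxm | ⟨hy2, hyle, hyne, hmx⟩
          · refine ⟨({m} : Finset ℕ), ?_, by simp [hxm]⟩
            intro e he; simp at he; subst he; exact hmmemP
          · obtain ⟨S, hS, hSsum⟩ := good (x - m) hy2 hyle hyne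
            refine ⟨insert m S, ?_, ?_⟩
            · intro e he
              rcases Finset.mem_insert.mp he with rfl | he'
              · exact hmmemP
              · exact hsubP (hS he')
            · rw [Finset.sum_insert (hsmall S hS), hSsum]; omega
        · exact ⟨E.filter (· < m), hsubP, rfl⟩
        · obtain ⟨S, hS, hSsum⟩ := good (x - m) (by omega) (by omega) (by omega)
          refine ⟨insert m S, ?_, ?_⟩
          · intro e he
            rcases Finset.mem_insert.mp he with rfl | he'
            · exact hmmemP
            · exact hsubP (hS he')
          · rw [Finset.sum_insert (hsmall S hS), hSsum]; omega
    · -- Bad(m): rescue step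
      left
      obtain ⟨m₀, hm₀E, hmeq, hm₀4, _, hs₀, good₀⟩ := bad
      set s₀ := ∑ d ∈ E.filter (· < m₀), d with hs₀def
      have hins₀ : E.filter (· < m) = insert m₀ (E.filter (· < m₀)) := by
        ext e
        simp only [Finset.mem_filter, Finset.mem_insert]
        constructor
        · rintro ⟨he, hlt⟩
          rcases eq_or_ne e m₀ with h | h
          · exact Or.inl h
          · exact Or.inr ⟨he, by omega⟩
        · rintro (rfl | ⟨he, hlt⟩)
          · exact ⟨hm₀E, by omega⟩
          · exact ⟨he, by omega⟩
      have hnm₀ : m₀ ∉ E.filter (· < m₀) := by simp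
      have hsum₀ : ∑ d ∈ E.filter (· < m), d = m₀ + s₀ := by
        rw [hins₀, Finset.sum_insert hnm₀]
      have hsub₀ : E.filter (· < m₀) ⊆ E.filter (· < m + 1) := by
        intro e he
        simp only [Finset.mem_filter] at he ⊢
        exact ⟨he.1, by omega⟩
      have hm₀memP : m₀ ∈ E.filter (· < m + 1) := by
        simp only [Finset.mem_filter]; exact ⟨hm₀E, by omega⟩
      have h2memP0 : (2 : ℕ) ∈ E.filter (· < m₀) := by
        simp only [Finset.mem_filter]; exact ⟨h2, by omega⟩
      have hsmall₀ : ∀ S ⊆ E.filter (· < m₀), ∀ e ∈ S, e < m₀ := by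
        intro S hS e heS
        have := hS heS
        simp only [Finset.mem_filter] at this
        exact this.2
      intro x hx2 hxle hxne
      rw [hsum, hsum₀] at hxle hxne
      -- total = m + m₀ + s₀ = (m₀+1) + m₀ + (m₀+2) = 3m₀+3
      rcases show x ≤ m₀ ∨ x = m₀ + 1 ∨ x = m₀ + 2 ∨ x = m₀ + 3 ∨
          (m₀ + 4 ≤ x ∧ x ≤ 2*m₀ + 2 ∧ x ≠ 2*m₀ + 1) ∨ x = 2*m₀ + 1 ∨
          (2*m₀ + 3 ≤ x ∧ x ≤ 3*m₀ + 3 ∧ x ≠ 3*m₀ + 2)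
          by omega with hc | rfl | hx | rfl | ⟨h1, h2', h3'⟩ | rfl | ⟨h1, h2', h3'⟩
      · -- x ≤ m₀ : direct from good₀
        obtain ⟨S, hS, hSsum⟩ := good₀ x hx2 (by omega) (by omega)
        exact ⟨S, hS.trans hsub₀, hSsum⟩
      · -- x = m₀ + 1 = m
        refine ⟨({m} : Finset ℕ), ?_, by simp [hmeq]⟩
        intro e he; simp at he; subst he; exact hmmemP
      · -- x = m₀ + 2 = s₀ : whole prefix
        exact ⟨E.filter (· < m₀), hsub₀, by omega⟩
      · -- x = m₀ + 3 : {2, m}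
        refine ⟨{2, m}, ?_, ?_⟩
        · intro e he
          simp only [Finset.mem_insert, Finset.mem_singleton] at he
          rcases he with rfl | rfl
          · exact hsub₀ h2memP0
          · exact hmmemP
        · rw [Finset.sum_pair (by omega)]; omega
      · -- m₀+4 ≤ x ≤ 2m₀+2, x ≠ 2m₀+1 : insert m₀ (rep (x - m₀))
        obtain ⟨S, hS, hSsum⟩ := good₀ (x - m₀) (by omega) (by omega) (by omega)
        refine ⟨insert m₀ S, ?_, ?_⟩
        · intro e he
          rcases Finset.mem_insert.mp he with rfl | he'
          · exact hm₀memP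
          · exact hsub₀ (hS he')
        · have : m₀ ∉ S := fun hmem => by have := hsmall₀ S hS m₀ hmem; omega
          rw [Finset.sum_insert this, hSsum]; omega
      · -- x = 2m₀+1 : insert m (rep m₀)
        obtain ⟨S, hS, hSsum⟩ := good₀ m₀ (by omega) (by omega) (by omega)
        refine ⟨insert m S, ?_, ?_⟩
        · intro e he
          rcases Finset.mem_insert.mp he with rfl | he'
          · exact hmmemP
          · exact hsub₀ (hS he')
        · have : m ∉ S := fun hmem => by have := hsmall₀ S hS m hmem; omega
          rw [Finset.sum_insert this, hSsum]; omega
      · -- 2m₀+3 ≤ x ≤ 3m₀+3, x ≠ 3m₀+2 : insert m (insert m₀ (rep z))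
        obtain ⟨S, hS, hSsum⟩ := good₀ (x - 2*m₀ - 1) (by omega) (by omega) (by omega)
        have hm₀S : m₀ ∉ S := fun hmem => by have := hsmall₀ S hS m₀ hmem; omega
        have hmS : m ∉ insert m₀ S := by
          intro hmem
          rcases Finset.mem_insert.mp hmem with h | h
          · omega
          · have := hsmall₀ S hS m h; omega
        refine ⟨insert m (insert m₀ S), ?_, ?_⟩
        · intro e he
          rcases Finset.mem_insert.mp he with rfl | he'
          · exact hmmemP
          · rcases Finset.mem_insert.mp he' with rfl | he''
            · exact hm₀memP
            · exact hsub₀ (hS he'')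
        · rw [Finset.sum_insert hmS, Finset.sum_insert hm₀S, hSsum]; omega

section facts
variable {n : ℕ} (hn : 3 ≤ n) (h : SemiPractical n)

lemma mem_ge2 : ∀ e ∈ n.divisors.erase 1, 2 ≤ e := by
  intro e he
  rw [Finset.mem_erase, Nat.mem_divisors] at he
  have : e ≠ 0 := by rintro rfl; rcases he.2.1 with ⟨c, hc⟩; omega
  omega

lemma mem_le (e : ℕ) (he : e ∈ n.divisors.erase 1) : e ≤ n := by
  have h' := Nat.mem_divisors.mp (Finset.mem_of_mem_erase he)
  exact Nat.le_of_dvd (Nat.pos_of_ne_zero h'.2) h'.1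

lemma elem_le_sum {S : Finset ℕ} {e : ℕ} (he : e ∈ S) : e ≤ ∑ d ∈ S, d :=
  Finset.single_le_sum (f := fun d => d) (fun i _ => Nat.zero_le i) he

include hn h

lemma two_mem : 2 ∈ n.divisors.erase 1 := by
  obtain ⟨S, hS, hsum⟩ := h 2 (by norm_num) (by omega)
  obtain ⟨e, he⟩ : S.Nonempty := by
    rcases S.eq_empty_or_nonempty with rfl | hne
    · simp at hsum
    · exact hne
  have h1 := mem_ge2 e (hS he)
  have h2 : e ≤ 2 := hsum ▸ elem_le_sum he
  have : e = 2 := by omega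
  exact hS (this ▸ he)

lemma n_even : 2 ∣ n := (Nat.mem_divisors.mp (Finset.mem_of_mem_erase (two_mem hn h))).1

lemma three_mem : 3 ∈ n.divisors.erase 1 := by
  have h2 := n_even hn h
  have hn4 : 4 ≤ n := by rcases h2 with ⟨c, rfl⟩; omega
  obtain ⟨S, hS, hsum⟩ := h 3 (by norm_num) (by omega)
  by_cases h3 : 3 ∈ S
  · exact hS h3
  · exfalso
    have hsub : S ⊆ {2} := by
      intro e he
      have h1 := mem_ge2 e (hS he)
      have h2' : e ≤ 3 := hsum ▸ elem_le_sum he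
      have : e ≠ 3 := fun hh => h3 (hh ▸ he)
      simp only [Finset.mem_singleton]; omega
    have := Finset.sum_le_sum_of_subset (f := fun d => d) hsub
    simp only [Finset.sum_singleton] at this
    omega

lemma three_dvd : 3 ∣ n := (Nat.mem_divisors.mp (Finset.mem_of_mem_erase (three_mem hn h))).1

lemma six_dvd : 6 ∣ n :=
  (Nat.Coprime.mul_dvd_of_dvd_of_dvd (by norm_num) (n_even hn h) (three_dvd hn h))

lemma four_mem : 4 ∈ n.divisors.erase 1 := by
  have h6 : 6 ≤ n := Nat.le_of_dvd (by omega) (six_dvd hn h)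
  obtain ⟨S, hS, hsum⟩ := h 4 (by norm_num) (by omega)
  by_cases h4 : 4 ∈ S
  · exact hS h4
  · exfalso
    have hsub : S ⊆ ({2, 3} : Finset ℕ) := by
      intro e he
      have h1 := mem_ge2 e (hS he)
      have h2' : e ≤ 4 := hsum ▸ elem_le_sum he
      have : e ≠ 4 := fun hh => h4 (hh ▸ he)
      simp only [Finset.mem_insert, Finset.mem_singleton]; omega
    have := sum_ne_pred ({2, 3} : Finset ℕ) S (by intro e he; fin_cases he <;> norm_num) hsub
    rw [Finset.sum_pair (by norm_num)] at this
    omega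

lemma twelve_dvd : 12 ∣ n :=
  Nat.Coprime.mul_dvd_of_dvd_of_dvd (by norm_num)
    (Nat.mem_divisors.mp (Finset.mem_of_mem_erase (four_mem hn h))).1 (three_dvd hn h)

lemma sigma_ne : ∑ d ∈ n.divisors, d ≠ 2 * n + 3 := by
  obtain ⟨k, rfl⟩ := twelve_dvd hn h
  have hk : 1 ≤ k := by omega
  intro heq
  have hsub : ({1, 2, 3*k, 4*k, 6*k, 12*k} : Finset ℕ) ⊆ (12*k).divisors := by
    intro d hd
    rw [Nat.mem_divisors]
    simp only [Finset.mem_insert, Finset.mem_singleton] at hd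
    rcases hd with rfl | rfl | rfl | rfl | rfl | rfl
    · exact ⟨one_dvd _, by omega⟩
    · exact ⟨⟨6*k, by ring⟩, by omega⟩
    · exact ⟨⟨4, by ring⟩, by omega⟩
    · exact ⟨⟨3, by ring⟩, by omega⟩
    · exact ⟨⟨2, by ring⟩, by omega⟩
    · exact ⟨⟨1, by ring⟩, by omega⟩
  have hsumF : ∑ d ∈ ({1, 2, 3*k, 4*k, 6*k, 12*k} : Finset ℕ), d = 1 + (2 + (3*k + (4*k + (6*k + 12*k)))) := by
    rw [Finset.sum_insert (by simp; omega), Finset.sum_insert (by simp; omega),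
      Finset.sum_insert (by simp; omega), Finset.sum_insert (by simp; omega),
      Finset.sum_insert (by simp; omega), Finset.sum_singleton]
  have := Finset.sum_le_sum_of_subset (f := fun d => d) hsub
  rw [hsumF, heq] at this
  omega

lemma key1 : ∀ e ∈ n.divisors.erase 1, 4 ≤ e →
    e + 1 ≤ ∑ d ∈ (n.divisors.erase 1).filter (· < e), d := by
  intro e he he4
  have hen := mem_le e he
  have hP2 : ∀ d ∈ (n.divisors.erase 1).filter (· < e), 2 ≤ d :=
    fun d hd => mem_ge2 d (Finset.mem_filter.mp hd).1
  have rep : ∀ y : ℕ, 1 < y → y < e → ∃ S ⊆ (n.divisors.erase 1).filter (· < e), ∑ d ∈ S, d = y := by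
    intro y hy1 hye
    obtain ⟨S, hS, hsum⟩ := h y hy1 (by omega)
    refine ⟨S, ?_, hsum⟩
    intro t ht
    rw [Finset.mem_filter]
    refine ⟨hS ht, ?_⟩
    have := hsum ▸ elem_le_sum ht
    omega
  obtain ⟨S1, hS1, hs1⟩ := rep (e - 1) (by omega) (by omega)
  obtain ⟨S2, hS2, hs2⟩ := rep (e - 2) (by omega) (by omega)
  have b1 := hs1 ▸ Finset.sum_le_sum_of_subset (f := fun d => d) hS1
  have b2 := hs1 ▸ sum_ne_pred _ S1 hP2 hS1
  have b3 := hs2 ▸ sum_ne_pred _ S2 hP2 hS2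
  omega

lemma D_eq_insert : n.divisors.erase 1 = insert n ((n.divisors.erase 1).filter (· < n)) := by
  have hnD : n ∈ n.divisors.erase 1 :=
    Finset.mem_erase.mpr ⟨by omega, Nat.mem_divisors.mpr ⟨dvd_refl n, by omega⟩⟩
  ext e
  simp only [Finset.mem_insert, Finset.mem_filter]
  constructor
  · intro he
    rcases eq_or_ne e n with hh | hh
    · exact Or.inl hh
    · exact Or.inr ⟨he, lt_of_le_of_ne (mem_le e he) hh⟩
  · rintro (rfl | ⟨he, _⟩)
    · exact hnD
    · exact he

lemma sigma_split : ∑ d ∈ n.divisors, d = ∑ d ∈ (n.divisors.erase 1).filter (· < n), d + n + 1 := by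
  have h1 : (1 : ℕ) ∈ n.divisors := Nat.one_mem_divisors.mpr (by omega)
  have h2 : ∑ d ∈ n.divisors.erase 1, d = n + ∑ d ∈ (n.divisors.erase 1).filter (· < n), d := by
    conv_lhs => rw [D_eq_insert hn h]
    rw [Finset.sum_insert (by simp)]
  have h3 : ∑ d ∈ n.divisors.erase 1, d + 1 = ∑ d ∈ n.divisors, d :=
    Finset.sum_erase_add n.divisors (fun d => d) h1
  omega

lemma key2 : ∀ e ∈ n.divisors.erase 1, 4 ≤ e →
    e + 2 = ∑ d ∈ (n.divisors.erase 1).filter (· < e), d → e + 1 ∈ n.divisors.erase 1 := by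
  intro e he he4 hes
  have hen := mem_le e he
  have hednd := (Nat.mem_divisors.mp (Finset.mem_of_mem_erase he)).1
  rcases eq_or_ne e n with rfl | hne
  · exfalso
    exact sigma_ne hn h (by rw [sigma_split hn h]; omega)
  · -- e < n, in fact 2e ≤ n
    have h2e : 2 * e ≤ n := by
      obtain ⟨c, rfl⟩ := hednd
      have hc0 : c ≠ 0 := by rintro rfl; omega
      have hc1 : c ≠ 1 := by rintro rfl; omega
      have hc2 : 2 ≤ c := by omega
      calc 2 * e = e * 2 := by ring
        _ ≤ e * c := Nat.mul_le_mul_left e hc2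
    obtain ⟨S, hS, hsum⟩ := h (e + 1) (by omega) (by omega)
    by_cases h1 : e + 1 ∈ S
    · exact hS h1
    · exfalso
      by_cases h2 : e ∈ S
      · -- rest sums to 1 : impossible
        have hh : ∑ d ∈ S.erase e, d + e = ∑ d ∈ S, d :=
          Finset.sum_erase_add S (fun d => d) h2
        have hrest : ∑ d ∈ S.erase e, d = 1 := by omega
        obtain ⟨t, ht⟩ : (S.erase e).Nonempty := by
          rcases (S.erase e).eq_empty_or_nonempty with hh | hh
          · rw [hh] at hrest; simp at hrest
          · exact hh
        have := mem_ge2 t (hS (Finset.mem_of_mem_erase ht))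
        have := hrest ▸ elem_le_sum ht
        omega
      · have hsub : S ⊆ (n.divisors.erase 1).filter (· < e) := by
          intro t ht
          rw [Finset.mem_filter]
          refine ⟨hS ht, ?_⟩
          have h3 : t ≤ e + 1 := hsum ▸ elem_le_sum ht
          have : t ≠ e + 1 := fun hh => h1 (hh ▸ ht)
          have : t ≠ e := fun hh => h2 (hh ▸ ht)
          omega
        have := hsum ▸ sum_ne_pred _ S
          (fun d hd => mem_ge2 d (Finset.mem_filter.mp hd).1) hsub
        omega

end facts


/-- A semi-practical number `n ≥ 3` is two-layered iff `σ(n)` is odd. -/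
theorem stmt_6 (n : ℕ) (hn : 3 ≤ n) (h : SemiPractical n) :
    TwoLayered n ↔ Odd (∑ d ∈ n.divisors, d) := by
  have h1div : (1 : ℕ) ∈ n.divisors := Nat.one_mem_divisors.mpr (by omega)
  have hadd : ∑ d ∈ n.divisors.erase 1, d + 1 = ∑ d ∈ n.divisors, d :=
    Finset.sum_erase_add n.divisors (fun d => d) h1div
  constructor
  · rintro ⟨A, B, hU, hdisj, hsums⟩
    have hDsum : ∑ d ∈ n.divisors.erase 1, d = ∑ d ∈ A, d + ∑ d ∈ B, d := by
      rw [← hU, Finset.sum_union hdisj]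
    rw [Nat.odd_iff]
    omega
  · intro hodd
    rw [Nat.odd_iff] at hodd
    have hn12 : 12 ≤ n := Nat.le_of_dvd (by omega) (twelve_dvd hn h)
    have hnD : n ∈ n.divisors.erase 1 :=
      Finset.mem_erase.mpr ⟨by omega, Nat.mem_divisors.mpr ⟨dvd_refl n, by omega⟩⟩
    have hsig := sigma_split hn h
    have hk1n := key1 hn h n hnD (by omega)
    have hne3 := sigma_ne hn h
    have hfilt : (n.divisors.erase 1).filter (· < n + 1) = n.divisors.erase 1 := by
      apply Finset.filter_true_of_mem
      intro e he
      have := mem_le e he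
      omega
    have hkeyall : ∀ e ∈ n.divisors.erase 1, 4 ≤ e →
        e + 1 ≤ ∑ d ∈ (n.divisors.erase 1).filter (· < e), d ∧
        (e + 2 = ∑ d ∈ (n.divisors.erase 1).filter (· < e), d →
          e + 1 ∈ n.divisors.erase 1) :=
      fun e he he4 => ⟨key1 hn h e he he4, key2 hn h e he he4⟩
    rcases gen_reach (n.divisors.erase 1) (two_mem hn h) (three_mem hn h)
        mem_ge2 hkeyall (n + 1) with good | bad
    · rw [hfilt] at good
      obtain ⟨S, hS, hSsum⟩ :=
        good ((∑ d ∈ n.divisors.erase 1, d) / 2) (by omega) (by omega) (by omega)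
      refine ⟨S, (n.divisors.erase 1) \ S, (Finset.union_sdiff_of_subset hS).symm ▸ rfl,
        Finset.disjoint_sdiff, ?_⟩
      have hsd : ∑ d ∈ (n.divisors.erase 1) \ S, d + ∑ d ∈ S, d =
          ∑ d ∈ n.divisors.erase 1, d := Finset.sum_sdiff hS
      omega
    · obtain ⟨m, hmD, hb, _, _, hs, _⟩ := bad
      have hmn : m = n := by omega
      subst hmn
      exact (hne3 (by omega)).elim
end

section
/- A positive even integer n is half-layered if and only if (σ(n) − 2n − 1)/2 can be written as a sum (possibly the empty sum) of distinct positive divisors of n excluding n, n/2, and 1. -/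
/-- A positive integer `n` is half-layered if its proper positive divisors excluding `1`
can be partitioned into two disjoint non-empty subsets with equal sum. -/
def HalfLayered (n : ℕ) : Prop :=
  ∃ A B : Finset ℕ, A ∪ B = n.properDivisors.erase 1 ∧ Disjoint A B ∧
    A.Nonempty ∧ B.Nonempty ∧ ∑ d ∈ A, d = ∑ d ∈ B, d

lemma sumP (n : ℕ) (h2 : 2 ≤ n) :
    ∑ d ∈ n.properDivisors.erase 1, (d : ℤ) = (∑ d ∈ n.divisors, (d : ℤ)) - n - 1 := by
  have h1 : (1:ℕ) ∈ n.properDivisors := Nat.one_mem_properDivisors_iff_one_lt.mpr h2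
  have hins : insert n n.properDivisors = n.divisors :=
    Nat.insert_self_properDivisors (by omega)
  have hnmem : n ∉ n.properDivisors := by
    simp [Nat.mem_properDivisors]
  have hd : ∑ d ∈ n.divisors, (d:ℤ) = (n:ℤ) + ∑ d ∈ n.properDivisors, (d:ℤ) := by
    rw [← hins, Finset.sum_insert hnmem]
  have he : ((1:ℕ):ℤ) + ∑ d ∈ n.properDivisors.erase 1, (d:ℤ)
      = ∑ d ∈ n.properDivisors, (d:ℤ) := Finset.add_sum_erase _ _ h1
  push_cast at he
  linarith

lemma half_mem (n : ℕ) (h4 : 4 ≤ n) (heven : Even n) :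
    n / 2 ∈ n.properDivisors.erase 1 := by
  obtain ⟨k, hk⟩ := heven
  have hk2 : n = 2 * k := by omega
  have hdiv : n / 2 = k := by omega
  refine Finset.mem_erase.mpr ⟨by omega, Nat.mem_properDivisors.mpr ⟨⟨2, by omega⟩, by omega⟩⟩

lemma half_cast (n : ℕ) (heven : Even n) : ((n / 2 : ℕ) : ℤ) * 2 = (n : ℤ) := by
  obtain ⟨k, hk⟩ := heven
  have : n / 2 = k := by omega
  rw [this]
  omega

lemma aux_fwd (n : ℕ) (h4 : 4 ≤ n) (heven : Even n) (A B : Finset ℕ)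
    (hU : A ∪ B = n.properDivisors.erase 1) (hdisj : Disjoint A B)
    (hsum : ∑ d ∈ A, d = ∑ d ∈ B, d) (hmem : n / 2 ∈ A) :
    ∃ S ⊆ ((n.divisors.erase 1).erase (n / 2)).erase n,
      2 * ∑ d ∈ S, (d : ℤ) = (∑ d ∈ n.divisors, (d : ℤ)) - 2 * n - 1 := by
  refine ⟨A.erase (n/2), ?_, ?_⟩
  · intro d hd
    obtain ⟨hdne, hdA⟩ := Finset.mem_erase.mp hd
    have hdP : d ∈ n.properDivisors.erase 1 := by
      rw [← hU]; exact Finset.mem_union_left _ hdA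
    obtain ⟨h1, hp⟩ := Finset.mem_erase.mp hdP
    obtain ⟨hdvd, hlt⟩ := Nat.mem_properDivisors.mp hp
    simp only [Finset.mem_erase, Nat.mem_divisors]
    exact ⟨by omega, hdne, h1, hdvd, by omega⟩
  · have hA2 : ((n/2 : ℕ):ℤ) + ∑ d ∈ A.erase (n/2), (d:ℤ) = ∑ d ∈ A, (d:ℤ) :=
      Finset.add_sum_erase _ _ hmem
    have htot : ∑ d ∈ A, (d:ℤ) + ∑ d ∈ B, (d:ℤ)
        = ∑ d ∈ n.properDivisors.erase 1, (d:ℤ) := by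
      rw [← hU, Finset.sum_union hdisj]
    have hP := sumP n (by omega)
    have hAB : (∑ d ∈ A, d : ℕ) = (∑ d ∈ B, d : ℕ) := hsum
    have hABz : ∑ d ∈ A, (d:ℤ) = ∑ d ∈ B, (d:ℤ) := by
      rw [← Nat.cast_sum, ← Nat.cast_sum]; exact_mod_cast hAB
    have hc := half_cast n heven
    linarith

/-- A positive even integer `n` is half-layered iff `(σ(n) - 2n - 1)/2` is a sum
(possibly the empty sum) of distinct positive divisors of `n` excluding `n`, `n/2`
and `1`; the equation is stated multiplied out over `ℤ`. -/
theorem stmt_11 (n : ℕ) (hn : 0 < n) (heven : Even n) :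
    HalfLayered n ↔
      ∃ S ⊆ ((n.divisors.erase 1).erase (n / 2)).erase n,
        2 * ∑ d ∈ S, (d : ℤ) = (∑ d ∈ n.divisors, (d : ℤ)) - 2 * n - 1 := by
  rcases le_or_gt n 2 with h2 | h2
  · -- n = 2
    have hn2 : n = 2 := by
      obtain ⟨k, hk⟩ := heven; omega
    subst hn2
    constructor
    · rintro ⟨A, B, hU, hdisj, hA, hB, hsum⟩
      exfalso
      have : (Nat.properDivisors 2).erase 1 = ∅ := by decide
      rw [this] at hU
      obtain ⟨a, ha⟩ := hA
      have : a ∈ A ∪ B := Finset.mem_union_left _ ha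
      rw [hU] at this
      simp at this
    · rintro ⟨S, hS, heq⟩
      exfalso
      have hempty : (((Nat.divisors 2).erase 1).erase (2/2)).erase 2 = ∅ := by decide
      rw [hempty] at hS
      have : S = ∅ := Finset.subset_empty.mp hS
      subst this
      have h2d : Nat.divisors 2 = {1, 2} := by decide
      rw [h2d] at heq
      simp at heq
  · have h4 : 4 ≤ n := by
      obtain ⟨k, hk⟩ := heven; omega
    constructor
    · rintro ⟨A, B, hU, hdisj, hA, hB, hsum⟩
      have hhalf : n / 2 ∈ A ∪ B := by
        rw [hU]; exact half_mem n h4 heven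
      rcases Finset.mem_union.mp hhalf with hmem | hmem
      · exact aux_fwd n h4 heven A B hU hdisj hsum hmem
      · exact aux_fwd n h4 heven B A (by rw [Finset.union_comm]; exact hU)
          hdisj.symm hsum.symm hmem
    · rintro ⟨S, hS, heq⟩
      have hn2P := half_mem n h4 heven
      have hSP : S ⊆ n.properDivisors.erase 1 := by
        intro d hd
        have := hS hd
        simp only [Finset.mem_erase, Nat.mem_divisors] at this
        obtain ⟨hne, hnhalf, h1, hdvd, -⟩ := this
        have hle : d ≤ n := Nat.le_of_dvd (by omega) hdvd
        exact Finset.mem_erase.mpr ⟨h1, Nat.mem_properDivisors.mpr ⟨hdvd, by omega⟩⟩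
      have hn2S : n / 2 ∉ S := by
        intro h
        have := hS h
        simp only [Finset.mem_erase] at this
        exact this.2.1 rfl
      set A : Finset ℕ := insert (n/2) S with hAdef
      set B : Finset ℕ := (n.properDivisors.erase 1) \ A with hBdef
      have hAsub : A ⊆ n.properDivisors.erase 1 := Finset.insert_subset hn2P hSP
      have hUn : A ∪ B = n.properDivisors.erase 1 := Finset.union_sdiff_of_subset hAsub
      have hdisj : Disjoint A B := Finset.disjoint_sdiff
      have hAsum : ∑ d ∈ A, (d:ℤ) = ((n/2 : ℕ):ℤ) + ∑ d ∈ S, (d:ℤ) :=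
        Finset.sum_insert hn2S
      have htot : ∑ d ∈ A, (d:ℤ) + ∑ d ∈ B, (d:ℤ)
          = ∑ d ∈ n.properDivisors.erase 1, (d:ℤ) := by
        rw [← hUn, Finset.sum_union hdisj]
      have hP := sumP n (by omega)
      have hc := half_cast n heven
      have hABz : ∑ d ∈ A, (d:ℤ) = ∑ d ∈ B, (d:ℤ) := by linarith
      have hABn : ∑ d ∈ A, d = ∑ d ∈ B, d := by
        have : ((∑ d ∈ A, d : ℕ) : ℤ) = ((∑ d ∈ B, d : ℕ) : ℤ) := by
          push_cast; exact hABz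
        exact_mod_cast this
      have h2P : 2 ∈ n.properDivisors.erase 1 := by
        refine Finset.mem_erase.mpr ⟨by omega, Nat.mem_properDivisors.mpr ⟨?_, by omega⟩⟩
        obtain ⟨k, hk⟩ := heven; exact ⟨k, by omega⟩
      have hBne : B.Nonempty := by
        by_contra hB
        rw [Finset.not_nonempty_iff_eq_empty] at hB
        have hB0 : ∑ d ∈ B, (d:ℤ) = 0 := by rw [hB]; simp
        have hPle : (2:ℤ) ≤ ∑ d ∈ n.properDivisors.erase 1, (d:ℤ) := by
          have := Finset.single_le_sum (f := fun d : ℕ => (d:ℤ))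
            (fun i _ => by positivity) h2P
          simpa using this
        linarith
      exact ⟨A, B, hUn, hdisj, ⟨n/2, Finset.mem_insert_self _ _⟩, hBne, hABn⟩
end

section
/- If n is an odd half-layered positive integer, then σ(n) is even; equivalently, at least one exponent in the prime factorization of n is odd. -/
/-- If `n` is an odd half-layered positive integer, then `σ(n)` is even; equivalently,
at least one exponent in the prime factorization of `n` is odd. -/
theorem stmt_12 (n : ℕ) (hn : 0 < n) (hodd : Odd n) (h : HalfLayered n) :
    Even (∑ d ∈ n.divisors, d) ∧
    ∃ q : ℕ, q.Prime ∧ q ∣ n ∧ Odd (n.factorization q) := by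
  obtain ⟨A, B, hU, hD, hA, hB, hS⟩ := h
  -- n > 1
  have h1n : 1 < n := by
    obtain ⟨a, ha⟩ := hA
    have : a ∈ n.properDivisors.erase 1 := by
      rw [← hU]; exact Finset.mem_union_left _ ha
    have hne := Finset.ne_of_mem_erase this
    have hd := Finset.mem_of_mem_erase this
    have h2 := Nat.mem_properDivisors.mp hd
    have h3 := Nat.pos_of_mem_properDivisors hd
    omega
  have h1mem : (1 : ℕ) ∈ n.properDivisors :=
    Nat.one_mem_properDivisors_iff_one_lt.mpr h1n
  -- sum of divisors
  have hsum : ∑ d ∈ n.divisors, d = 2 * (∑ d ∈ A, d) + 1 + n := by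
    rw [Nat.sum_divisors_eq_sum_properDivisors_add_self,
      ← Finset.add_sum_erase _ _ h1mem, ← hU, Finset.sum_union hD, ← hS]
    ring
  have heven : Even (∑ d ∈ n.divisors, d) := by
    obtain ⟨k, hk⟩ := hodd
    rw [hsum, hk]
    exact ⟨∑ d ∈ A, d + 1 + k, by ring⟩
  refine ⟨heven, ?_⟩
  -- parity of card of divisors: every divisor is odd, sum is even, so card even
  have hcard : Even n.divisors.card := by
    have hz : ((∑ d ∈ n.divisors, d : ℕ) : ZMod 2) = 0 := by
      exact_mod_cast (ZMod.natCast_eq_zero_iff _ _).mpr heven.two_dvd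
    rw [Nat.cast_sum] at hz
    have hone : ∀ d ∈ n.divisors, ((d : ℕ) : ZMod 2) = 1 := by
      intro d hd
      have hdvd := (Nat.mem_divisors.mp hd).1
      have hdodd : Odd d := by
        rcases Nat.even_or_odd d with he | ho
        · exact absurd (he.two_dvd.trans hdvd |> (even_iff_two_dvd).mpr)
            (Nat.not_even_iff_odd.mpr hodd)
        · exact ho
      calc ((d : ℕ) : ZMod 2) = ((d % 2 : ℕ) : ZMod 2) := (ZMod.natCast_mod d 2).symm
        _ = ((1 : ℕ) : ZMod 2) := by rw [Nat.odd_iff.mp hdodd]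
        _ = 1 := Nat.cast_one
    rw [Finset.sum_congr rfl hone, Finset.sum_const, nsmul_eq_mul, mul_one] at hz
    have := (ZMod.natCast_eq_zero_iff _ _).mp hz
    exact even_iff_two_dvd.mpr this
  -- card of divisors = product of (e+1)
  rw [Nat.card_divisors hn.ne'] at hcard
  have h2 : (2 : ℕ).Prime := Nat.prime_two
  obtain ⟨p, hp, hdvd2⟩ := (h2.prime.dvd_finset_prod_iff _).mp hcard.two_dvd
  refine ⟨p, Nat.prime_of_mem_primeFactors hp, Nat.dvd_of_mem_primeFactors hp, ?_⟩
  have := Nat.even_iff.mp (even_iff_two_dvd.mpr hdvd2)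
  rw [Nat.odd_iff]
  omega
end

section
/- Let n be a positive even integer. Then n is half-layered if and only if n admits a two-layered partition in which n and n/2 lie in distinct subsets. In particular, every even half-layered number is two-layered. -/
lemma build_aux (n : ℕ) (hn0 : n ≠ 0) (hn1 : n ≠ 1)
    (hmem : n / 2 ∈ n.properDivisors.erase 1)
    (h2 : n / 2 + n / 2 = n)
    (C D : Finset ℕ) (hU : C ∪ D = n.properDivisors.erase 1) (hD : Disjoint C D)
    (hS : ∑ d ∈ C, d = ∑ d ∈ D, d) (hC : n / 2 ∈ C) :
    ∃ A B : Finset ℕ, A ∪ B = n.divisors.erase 1 ∧ Disjoint A B ∧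
      (∑ d ∈ A, d = ∑ d ∈ B, d) ∧ n ∈ A ∧ n / 2 ∈ B := by
  have hnP : n ∉ n.properDivisors.erase 1 := by
    intro h
    have := (Nat.mem_properDivisors.mp (Finset.mem_of_mem_erase h)).2
    exact lt_irrefl _ this
  have hnC : n ∉ C := fun h => hnP (hU ▸ Finset.mem_union_left _ h)
  have hnD : n ∉ D := fun h => hnP (hU ▸ Finset.mem_union_right _ h)
  have hhD : n / 2 ∉ D := Finset.disjoint_left.mp hD hC
  have hne : n / 2 ≠ n := by omega
  refine ⟨insert n (C.erase (n / 2)), insert (n / 2) D, ?_, ?_, ?_,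
    Finset.mem_insert_self _ _, Finset.mem_insert_self _ _⟩
  · rw [Finset.insert_union, Finset.union_insert, ← Finset.insert_union,
      Finset.insert_erase hC, hU, ← Finset.erase_insert_of_ne hn1,
      Nat.insert_self_properDivisors hn0]
  · rw [Finset.disjoint_insert_left, Finset.disjoint_insert_right]
    refine ⟨by simp [hnD, hne, hne.symm], by simp, ?_⟩
    exact Finset.disjoint_of_subset_left (Finset.erase_subset _ _) hD
  · rw [Finset.sum_insert (by simp [hnC]), Finset.sum_insert hhD]
    have e1 : ∑ d ∈ C.erase (n / 2), d + n / 2 = ∑ d ∈ C, d :=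
      Finset.sum_erase_add _ _ hC
    omega

/-- A positive even integer `n` is half-layered iff `n` admits a two-layered partition
in which `n` and `n/2` lie in distinct subsets. In particular, every even half-layered
number is two-layered. -/
theorem stmt_14 (n : ℕ) (hn : 0 < n) (heven : Even n) :
    (HalfLayered n ↔
      ∃ A B : Finset ℕ, A ∪ B = n.divisors.erase 1 ∧ Disjoint A B ∧
        (∑ d ∈ A, d = ∑ d ∈ B, d) ∧ n ∈ A ∧ n / 2 ∈ B) ∧
    (HalfLayered n → TwoLayered n) := by
  have h2 : n / 2 + n / 2 = n := by obtain ⟨k, hk⟩ := heven; omega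
  have hn0 : n ≠ 0 := hn.ne'
  have main : HalfLayered n ↔
      ∃ A B : Finset ℕ, A ∪ B = n.divisors.erase 1 ∧ Disjoint A B ∧
        (∑ d ∈ A, d = ∑ d ∈ B, d) ∧ n ∈ A ∧ n / 2 ∈ B := by
    constructor
    · rintro ⟨A, B, hU, hD, hAne, hBne, hS⟩
      -- derive n ≥ 4
      obtain ⟨d, hd⟩ := hAne
      have hdm : d ∈ n.properDivisors.erase 1 := hU ▸ Finset.mem_union_left _ hd
      have hd1 : d ≠ 1 := (Finset.mem_erase.mp hdm).1
      obtain ⟨hdvd, hdlt⟩ := Nat.mem_properDivisors.mp (Finset.mem_erase.mp hdm).2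
      have hd0 : d ≠ 0 := by rintro rfl; exact hn0 (Nat.eq_zero_of_zero_dvd hdvd)
      have hn4 : 4 ≤ n := by
        obtain ⟨k, rfl⟩ := hdvd
        have hk2 : 2 ≤ k := by
          rcases Nat.lt_or_ge k 2 with h | h
          · interval_cases k <;> omega
          · exact h
        calc 4 = 2 * 2 := rfl
          _ ≤ d * k := Nat.mul_le_mul (by omega) hk2
      have hmem : n / 2 ∈ n.properDivisors.erase 1 := by
        rw [Finset.mem_erase, Nat.mem_properDivisors]
        exact ⟨by omega, ⟨2, by omega⟩, by omega⟩
      have hhalf : n / 2 ∈ A ∪ B := hU ▸ hmem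
      rcases Finset.mem_union.mp hhalf with h | h
      · exact build_aux n hn0 (by omega) hmem h2 A B hU hD hS h
      · exact build_aux n hn0 (by omega) hmem h2 B A
          (by rw [Finset.union_comm]; exact hU) hD.symm hS.symm h
    · rintro ⟨A, B, hU, hD, hS, hnA, hhB⟩
      have hhalfmem : n / 2 ∈ n.divisors.erase 1 := hU ▸ Finset.mem_union_right _ hhB
      have h121 : n / 2 ≠ 1 := (Finset.mem_erase.mp hhalfmem).1
      have hne : n / 2 ≠ n := by omega
      have hnB : n ∉ B := Finset.disjoint_left.mp hD hnA
      have hhA : n / 2 ∉ A := fun h => Finset.disjoint_left.mp hD h hhB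
      have hprop : n.properDivisors = n.divisors.erase n := by
        rw [← Nat.insert_self_properDivisors hn0, Finset.erase_insert]
        intro h
        exact lt_irrefl _ (Nat.mem_properDivisors.mp h).2
      have hUnion : insert (n / 2) (A.erase n) ∪ B.erase (n / 2) =
          n.properDivisors.erase 1 := by
        rw [Finset.insert_union, Finset.union_comm (A.erase n), ← Finset.insert_union,
          Finset.insert_erase hhB, Finset.union_comm, hprop,
          Finset.erase_right_comm, ← hU,
          Finset.erase_union_distrib, Finset.erase_eq_of_notMem hnB]
      have hsA : ∑ d ∈ A.erase n, d + n = ∑ d ∈ A, d := Finset.sum_erase_add _ _ hnA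
      have hsB : ∑ d ∈ B.erase (n / 2), d + n / 2 = ∑ d ∈ B, d :=
        Finset.sum_erase_add _ _ hhB
      have hsum : ∑ d ∈ insert (n / 2) (A.erase n), d = n / 2 + ∑ d ∈ A.erase n, d :=
        Finset.sum_insert (by simp [hhA])
      refine ⟨insert (n / 2) (A.erase n), B.erase (n / 2), hUnion, ?_, ?_, ?_, ?_⟩
      · rw [Finset.disjoint_insert_left]
        refine ⟨by simp, hD.mono (Finset.erase_subset _ _) (Finset.erase_subset _ _)⟩
      · exact ⟨_, Finset.mem_insert_self _ _⟩
      · by_contra hB'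
        rw [Finset.not_nonempty_iff_eq_empty] at hB'
        have hz : ∑ d ∈ B.erase (n / 2), d = 0 := by rw [hB']; simp
        omega
      · rw [hsum]; omega
  exact ⟨main, fun h => by
    obtain ⟨A, B, h1, h2', h3, _, _⟩ := main.mp h
    exact ⟨A, B, h1, h2', h3⟩⟩
end

section
/- Let n be a positive even two-layered integer with σ(n) < 3n. Then n is half-layered. -/
lemma key_aux (n : ℕ) (hn : 0 < n) (heven : Even n) (A B : Finset ℕ)
    (hAB : A ∪ B = n.divisors.erase 1) (hdisj : Disjoint A B)
    (hsum : ∑ d ∈ A, d = ∑ d ∈ B, d)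
    (hσ : ∑ d ∈ n.divisors, d < 3 * n) (hnA : n ∈ A) : HalfLayered n := by
  obtain ⟨m, hm⟩ := heven
  have hn0 : n ≠ 0 := hn.ne'
  have h1div : (1:ℕ) ∈ n.divisors := Nat.one_mem_divisors.2 hn0
  have htot : ∑ d ∈ A, d + ∑ d ∈ B, d + 1 = ∑ d ∈ n.divisors, d := by
    rw [← Finset.sum_union hdisj, hAB]
    exact Finset.sum_erase_add _ _ h1div
  have hSge : n ≤ ∑ d ∈ A, d :=
    Finset.single_le_sum (f := fun i => i) (fun i _ => Nat.zero_le i) hnA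
  have hmemAB : ∀ x, (x ∈ A ∨ x ∈ B) ↔ (x ≠ 1 ∧ x ∣ n) := by
    intro x
    rw [← Finset.mem_union, hAB, Finset.mem_erase, Nat.mem_divisors]
    tauto
  have hm2 : 2 ≤ m := by
    rcases Nat.lt_or_ge m 2 with hlt | hge
    · exfalso
      interval_cases m
      · omega
      · -- n = 2
        have hn2 : n = 2 := by omega
        subst hn2
        have : ∑ d ∈ Nat.divisors 2, d = 3 := by decide
        omega
    · exact hge
  have hmdvd : m ∣ n := ⟨2, by omega⟩
  have hmAB : m ∈ A ∨ m ∈ B := (hmemAB m).2 ⟨by omega, hmdvd⟩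
  have hmB : m ∈ B := by
    rcases hmAB with hmA | hmB
    · exfalso
      have hpair : ({n, m} : Finset ℕ) ⊆ A := by
        intro x hx
        simp only [Finset.mem_insert, Finset.mem_singleton] at hx
        rcases hx with rfl | rfl <;> assumption
      have hne : n ≠ m := by omega
      have : n + m ≤ ∑ d ∈ A, d := by
        calc n + m = ∑ d ∈ ({n, m} : Finset ℕ), d := (Finset.sum_pair (f := fun d => d) hne).symm
        _ ≤ ∑ d ∈ A, d := Finset.sum_le_sum_of_subset hpair
      omega
    · exact hmB
  have hmnotA : m ∉ A := fun hmA => (Finset.disjoint_left.1 hdisj hmA) hmB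
  have hnnotB : n ∉ B := Finset.disjoint_left.1 hdisj hnA
  refine ⟨insert m (A.erase n), B.erase m, ?_, ?_, ⟨m, Finset.mem_insert_self m _⟩, ?_, ?_⟩
  · ext x
    simp only [Finset.mem_union, Finset.mem_insert, Finset.mem_erase,
      Nat.mem_properDivisors]
    constructor
    · rintro ((rfl | ⟨hxn, hxA⟩) | ⟨hxm, hxB⟩)
      · exact ⟨by omega, hmdvd, by omega⟩
      · obtain ⟨hx1, hxdvd⟩ := (hmemAB x).1 (Or.inl hxA)
        exact ⟨hx1, hxdvd, lt_of_le_of_ne (Nat.le_of_dvd hn hxdvd) hxn⟩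
      · obtain ⟨hx1, hxdvd⟩ := (hmemAB x).1 (Or.inr hxB)
        have hxn : x ≠ n := fun h => hnnotB (h ▸ hxB)
        exact ⟨hx1, hxdvd, lt_of_le_of_ne (Nat.le_of_dvd hn hxdvd) hxn⟩
    · rintro ⟨hx1, hxdvd, hxlt⟩
      rcases (hmemAB x).2 ⟨hx1, hxdvd⟩ with hxA | hxB
      · exact Or.inl (Or.inr ⟨by omega, hxA⟩)
      · rcases eq_or_ne x m with rfl | hxm
        · exact Or.inl (Or.inl rfl)
        · exact Or.inr ⟨hxm, hxB⟩
  · rw [Finset.disjoint_left]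
    intro x hx
    rw [Finset.mem_insert, Finset.mem_erase] at hx
    rcases hx with rfl | ⟨hxn, hxA⟩
    · simp
    · intro hx
      exact (Finset.disjoint_left.1 hdisj hxA) (Finset.mem_of_mem_erase hx)
  · -- B.erase m nonempty
    rw [Finset.nonempty_iff_ne_empty]
    intro hemp
    have hBsum : ∑ d ∈ B.erase m, d + m = ∑ d ∈ B, d := Finset.sum_erase_add _ _ hmB
    rw [hemp, Finset.sum_empty] at hBsum
    omega
  · have hAsum : ∑ d ∈ A.erase n, d + n = ∑ d ∈ A, d := Finset.sum_erase_add _ _ hnA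
    have hBsum : ∑ d ∈ B.erase m, d + m = ∑ d ∈ B, d := Finset.sum_erase_add _ _ hmB
    have hmnot : m ∉ A.erase n := fun hx => hmnotA (Finset.mem_of_mem_erase hx)
    rw [Finset.sum_insert hmnot]
    omega

/-- An even two-layered positive integer `n` with `σ(n) < 3n` is half-layered. -/
theorem stmt_15 (n : ℕ) (hn : 0 < n) (heven : Even n) (h : TwoLayered n)
    (hσ : ∑ d ∈ n.divisors, d < 3 * n) :
    HalfLayered n := by
  obtain ⟨A, B, hAB, hdisj, hsum⟩ := h
  have hn1 : n ≠ 1 := by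
    rintro rfl
    exact (Nat.not_even_one) heven
  have hnmem : n ∈ A ∪ B := by
    rw [hAB, Finset.mem_erase]
    exact ⟨hn1, Nat.mem_divisors_self n hn.ne'⟩
  rcases Finset.mem_union.1 hnmem with hnA | hnB
  · exact key_aux n hn heven A B hAB hdisj hsum hσ hnA
  · exact key_aux n hn heven B A (by rw [Finset.union_comm, hAB]) hdisj.symm hsum.symm hσ hnB
end

section
/- Let n be a positive even integer. Then n is two-layered if and only if either n is half-layered, or (σ(n) − 3n − 1)/2 can be written as a sum (possibly the empty sum) of distinct positive divisors of n excluding n, n/2, and 1. -/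
private lemma properDiv_erase_one (n : ℕ) (hn : 0 < n) :
    n.properDivisors.erase 1 = (n.divisors.erase 1).erase n := by
  ext x
  simp only [Finset.mem_erase, Nat.mem_properDivisors, Nat.mem_divisors]
  constructor
  · rintro ⟨h1, hdvd, hlt⟩
    exact ⟨hlt.ne, h1, hdvd, by omega⟩
  · rintro ⟨hne, h1, hdvd, h0⟩
    exact ⟨h1, hdvd, lt_of_le_of_ne (Nat.le_of_dvd hn hdvd) hne⟩

private lemma sum_div_erase_one (n : ℕ) (hn : 0 < n) :
    (∑ d ∈ n.divisors.erase 1, d) + 1 = ∑ d ∈ n.divisors, d := by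
  have h1 : 1 ∈ n.divisors := Nat.one_mem_divisors.mpr hn.ne'
  simpa using Finset.sum_erase_add n.divisors id h1

private lemma fwd_key (n : ℕ) (hn4 : 4 ≤ n) (hm : 2 * (n / 2) = n)
    (A B : Finset ℕ) (hU : A ∪ B = n.divisors.erase 1) (hd : Disjoint A B)
    (hs : ∑ d ∈ A, d = ∑ d ∈ B, d) (hnA : n ∈ A) :
    HalfLayered n ∨
      ∃ S ⊆ ((n.divisors.erase 1).erase (n / 2)).erase n,
        2 * ∑ d ∈ S, (d : ℤ) = (∑ d ∈ n.divisors, (d : ℤ)) - 3 * n - 1 := by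
  set m := n / 2 with hmdef
  have hm2 : 2 ≤ m := by omega
  have hmn : m ≠ n := by omega
  have hmdvd : m ∣ n := ⟨2, by omega⟩
  have hmD : m ∈ n.divisors.erase 1 := by
    simp only [Finset.mem_erase, Nat.mem_divisors]
    exact ⟨by omega, hmdvd, by omega⟩
  have htot : (∑ d ∈ n.divisors.erase 1, d) = ∑ d ∈ A, d + ∑ d ∈ B, d := by
    rw [← hU, Finset.sum_union hd]
  have hσ := sum_div_erase_one n (by omega)
  have hmAB : m ∈ A ∪ B := hU ▸ hmD
  by_cases hmA : m ∈ A
  · -- right disjunct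
    right
    refine ⟨(A.erase m).erase n, ?_, ?_⟩
    · intro x hx
      simp only [Finset.mem_erase] at hx
      have hxD : x ∈ n.divisors.erase 1 := hU ▸ Finset.mem_union_left _ hx.2.2
      simp only [Finset.mem_erase] at hxD ⊢
      exact ⟨hx.1, hx.2.1, hxD⟩
    · have hnAe : n ∈ A.erase m := Finset.mem_erase.mpr ⟨fun h => hmn h.symm, hnA⟩
      have e1 : (∑ d ∈ (A.erase m).erase n, d) + n = ∑ d ∈ A.erase m, d :=
        Finset.sum_erase_add _ id hnAe
      have e2 : (∑ d ∈ A.erase m, d) + m = ∑ d ∈ A, d :=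
        Finset.sum_erase_add _ id hmA
      have key : 2 * (∑ d ∈ (A.erase m).erase n, d) + 3 * n + 1
          = ∑ d ∈ n.divisors, d := by omega
      have key' := congrArg (Nat.cast : ℕ → ℤ) key
      push_cast at key'
      linarith
  · -- m ∈ B, left disjunct
    have hmB : m ∈ B := by
      rcases Finset.mem_union.mp hmAB with h | h
      · exact absurd h hmA
      · exact h
    have hnB : n ∉ B := fun h => (Finset.disjoint_left.mp hd hnA) h
    left
    refine ⟨insert m (A.erase n), B.erase m, ?_, ?_, ⟨m, Finset.mem_insert_self _ _⟩, ?_, ?_⟩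
    · rw [properDiv_erase_one n (by omega), ← hU]
      ext x
      simp only [Finset.mem_union, Finset.mem_insert, Finset.mem_erase]
      constructor
      · rintro ((rfl | ⟨hxn, hxA⟩) | ⟨hxm, hxB⟩)
        · exact ⟨hmn, Or.inr hmB⟩
        · exact ⟨hxn, Or.inl hxA⟩
        · exact ⟨fun h => hnB (h ▸ hxB), Or.inr hxB⟩
      · rintro ⟨hxn, hxA | hxB⟩
        · exact Or.inl (Or.inr ⟨hxn, hxA⟩)
        · by_cases hxm : x = m
          · exact Or.inl (Or.inl hxm)
          · exact Or.inr ⟨hxm, hxB⟩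
    · rw [Finset.disjoint_left]
      intro x hx hx'
      simp only [Finset.mem_insert, Finset.mem_erase] at hx hx'
      rcases hx with rfl | ⟨_, hxA⟩
      · exact hx'.1 rfl
      · exact (Finset.disjoint_left.mp hd hxA) hx'.2
    · -- B.erase m nonempty
      by_contra h
      rw [Finset.not_nonempty_iff_eq_empty, Finset.erase_eq_empty_iff] at h
      rcases h with h | h
      · exact absurd (h ▸ hmB) (Finset.notMem_empty m)
      · have hBm : ∑ d ∈ B, d = m := by rw [h]; simp
        have hAn : n ≤ ∑ d ∈ A, d :=
          Finset.single_le_sum (fun i _ => Nat.zero_le i) hnA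
        omega
    · have e1 : (∑ d ∈ A.erase n, d) + n = ∑ d ∈ A, d :=
        Finset.sum_erase_add _ id hnA
      have e2 : (∑ d ∈ B.erase m, d) + m = ∑ d ∈ B, d :=
        Finset.sum_erase_add _ id hmB
      have hmAe : m ∉ A.erase n := fun h => hmA (Finset.mem_of_mem_erase h)
      have e3 : ∑ d ∈ insert m (A.erase n), d = m + ∑ d ∈ A.erase n, d :=
        Finset.sum_insert hmAe
      omega

private lemma bwd_half (n : ℕ) (hn4 : 4 ≤ n) (hm : 2 * (n / 2) = n)
    (A B : Finset ℕ) (hU : A ∪ B = n.properDivisors.erase 1) (hd : Disjoint A B)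
    (hs : ∑ d ∈ A, d = ∑ d ∈ B, d) (hmA : n / 2 ∈ A) : TwoLayered n := by
  set m := n / 2 with hmdef
  have hmn : m ≠ n := by omega
  have hnD : n ∈ n.divisors.erase 1 := by
    simp only [Finset.mem_erase, Nat.mem_divisors]
    exact ⟨by omega, dvd_refl n, by omega⟩
  have hU' : A ∪ B = (n.divisors.erase 1).erase n := by
    rw [hU, properDiv_erase_one n (by omega)]
  have hnAB : n ∉ A ∪ B := by rw [hU']; simp
  have hnA : n ∉ A := fun h => hnAB (Finset.mem_union_left _ h)
  have hnB : n ∉ B := fun h => hnAB (Finset.mem_union_right _ h)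
  have hmB : m ∉ B := fun h => (Finset.disjoint_left.mp hd hmA) h
  refine ⟨insert n (A.erase m), insert m B, ?_, ?_, ?_⟩
  · have : n.divisors.erase 1 = insert n ((n.divisors.erase 1).erase n) :=
      (Finset.insert_erase hnD).symm
    rw [this, ← hU']
    ext x
    simp only [Finset.mem_union, Finset.mem_insert, Finset.mem_erase]
    constructor
    · rintro ((rfl | ⟨hxm, hxA⟩) | rfl | hxB)
      · exact Or.inl rfl
      · exact Or.inr (Or.inl hxA)
      · exact Or.inr (Or.inl hmA)
      · exact Or.inr (Or.inr hxB)
    · rintro (rfl | hxA | hxB)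
      · exact Or.inl (Or.inl rfl)
      · by_cases hxm : x = m
        · exact Or.inr (Or.inl hxm)
        · exact Or.inl (Or.inr ⟨hxm, hxA⟩)
      · exact Or.inr (Or.inr hxB)
  · rw [Finset.disjoint_left]
    intro x hx hx'
    simp only [Finset.mem_insert, Finset.mem_erase] at hx hx'
    rcases hx with rfl | ⟨hxm, hxA⟩
    · rcases hx' with h | h
      · exact hmn h.symm
      · exact hnB h
    · rcases hx' with h | h
      · exact hxm h
      · exact (Finset.disjoint_left.mp hd hxA) h
  · have e1 : (∑ d ∈ A.erase m, d) + m = ∑ d ∈ A, d :=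
      Finset.sum_erase_add _ id hmA
    have hnAe : n ∉ A.erase m := fun h => hnA (Finset.mem_of_mem_erase h)
    have e2 : ∑ d ∈ insert n (A.erase m), d = n + ∑ d ∈ A.erase m, d :=
      Finset.sum_insert hnAe
    have e3 : ∑ d ∈ insert m B, d = m + ∑ d ∈ B, d :=
      Finset.sum_insert hmB
    omega

/-- A positive even integer `n` is two-layered iff either `n` is half-layered or
`(σ(n) - 3n - 1)/2` is a sum (possibly the empty sum) of distinct positive divisors
of `n` excluding `n`, `n/2` and `1`; the equation is stated multiplied out over `ℤ`. -/
theorem stmt_16 (n : ℕ) (hn : 0 < n) (heven : Even n) :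
    TwoLayered n ↔
      HalfLayered n ∨
      ∃ S ⊆ ((n.divisors.erase 1).erase (n / 2)).erase n,
        2 * ∑ d ∈ S, (d : ℤ) = (∑ d ∈ n.divisors, (d : ℤ)) - 3 * n - 1 := by
  obtain ⟨k, hk⟩ := heven
  have hm : 2 * (n / 2) = n := by omega
  rcases eq_or_ne n 2 with rfl | hn2
  · -- n = 2 : both sides false
    have hdiv : (2 : ℕ).divisors = {1, 2} := by decide
    constructor
    · rintro ⟨A, B, hU, hd, hs⟩
      exfalso
      have hE : (2 : ℕ).divisors.erase 1 = {2} := by decide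
      have htot : ∑ d ∈ A, d + ∑ d ∈ B, d = 2 := by
        rw [← Finset.sum_union hd, hU, hE]; simp
      have hAsub : A ⊆ {2} := by
        rw [← hE, ← hU]; exact Finset.subset_union_left
      rcases Finset.subset_singleton_iff.mp hAsub with rfl | rfl
      · simp only [Finset.sum_empty] at hs htot
        omega
      · simp only [Finset.sum_singleton] at hs htot
        omega
    · rintro (⟨A, B, hU, hd, hA, hB, hs⟩ | ⟨S, hS, hsum⟩)
      · exfalso
        have hE : (2 : ℕ).properDivisors.erase 1 = ∅ := by decide
        rw [hE, Finset.union_eq_empty] at hU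
        exact Finset.not_nonempty_empty (hU.1 ▸ hA)
      · exfalso
        have hE : (((2 : ℕ).divisors.erase 1).erase (2 / 2)).erase 2 = ∅ := by decide
        rw [hE, Finset.subset_empty] at hS
        subst hS
        rw [hdiv] at hsum
        simp at hsum
  · -- n ≥ 4
    have hn4 : 4 ≤ n := by omega
    constructor
    · rintro ⟨A, B, hU, hd, hs⟩
      have hnD : n ∈ n.divisors.erase 1 := by
        simp only [Finset.mem_erase, Nat.mem_divisors]
        exact ⟨by omega, dvd_refl n, by omega⟩
      rcases Finset.mem_union.mp (hU ▸ hnD) with h | h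
      · exact fwd_key n hn4 hm A B hU hd hs h
      · exact fwd_key n hn4 hm B A (by rw [Finset.union_comm, hU]) hd.symm hs.symm h
    · rintro (⟨A, B, hU, hd, _, _, hs⟩ | ⟨S, hS, hsum⟩)
      · have hmP : n / 2 ∈ n.properDivisors.erase 1 := by
          simp only [Finset.mem_erase, Nat.mem_properDivisors]
          exact ⟨by omega, ⟨2, by omega⟩, by omega⟩
        rcases Finset.mem_union.mp (hU ▸ hmP) with h | h
        · exact bwd_half n hn4 hm A B hU hd hs h
        · exact bwd_half n hn4 hm B A (by rw [Finset.union_comm, hU]) hd.symm hs.symm h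
      · -- construct from S
        set m := n / 2 with hmdef
        have hmn : m ≠ n := by omega
        have hnD : n ∈ n.divisors.erase 1 := by
          simp only [Finset.mem_erase, Nat.mem_divisors]
          exact ⟨by omega, dvd_refl n, by omega⟩
        have hmD : m ∈ n.divisors.erase 1 := by
          simp only [Finset.mem_erase, Nat.mem_divisors]
          exact ⟨by omega, ⟨2, by omega⟩, by omega⟩
        have hSsub : S ⊆ n.divisors.erase 1 := fun x hx =>
          Finset.mem_of_mem_erase (Finset.mem_of_mem_erase (hS hx))
        have hnS : n ∉ S := fun h => (Finset.mem_erase.mp (hS h)).1 rfl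
        have hmS : m ∉ S := fun h =>
          (Finset.mem_erase.mp (Finset.mem_of_mem_erase (hS h))).1 rfl
        set A : Finset ℕ := insert n (insert m S) with hA
        have hAsub : A ⊆ n.divisors.erase 1 := by
          intro x hx
          rcases Finset.mem_insert.mp hx with rfl | hx
          · exact hnD
          · rcases Finset.mem_insert.mp hx with rfl | hx
            · exact hmD
            · exact hSsub hx
        refine ⟨A, (n.divisors.erase 1) \ A, Finset.union_sdiff_of_subset hAsub,
          Finset.disjoint_sdiff, ?_⟩
        have hnmS : n ∉ insert m S := by
          simp only [Finset.mem_insert]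
          rintro (h | h)
          · exact hmn h.symm
          · exact hnS h
        have eA : ∑ d ∈ A, d = n + (m + ∑ d ∈ S, d) := by
          rw [hA, Finset.sum_insert hnmS, Finset.sum_insert hmS]
        have etot : ∑ d ∈ A, d + ∑ d ∈ (n.divisors.erase 1) \ A, d
            = ∑ d ∈ n.divisors.erase 1, d := by
          rw [← Finset.sum_union Finset.disjoint_sdiff,
            Finset.union_sdiff_of_subset hAsub]
        have hσ := sum_div_erase_one n (by omega)
        have key : 2 * (∑ d ∈ S, d : ℤ) = (∑ d ∈ n.divisors, (d : ℤ)) - 3 * n - 1 := by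
          convert hsum using 2
        have hcast : ((∑ d ∈ n.divisors, d : ℕ) : ℤ) = ∑ d ∈ n.divisors, (d : ℤ) := by
          push_cast; rfl
        have key2 : 2 * (∑ d ∈ S, d) + 3 * n + 1 = ∑ d ∈ n.divisors, d := by
          have := key
          rw [← hcast] at this
          have : (2 * (∑ d ∈ S, d) + 3 * n + 1 : ℤ)
              = ((∑ d ∈ n.divisors, d : ℕ) : ℤ) := by push_cast; linarith
          exact_mod_cast this
        omega
end

section
/- Let n be a positive integer divisible by 6. If n is two-layered and σ(n) < 10n/3, then n is half-layered. -/
lemma pd_erase (m : ℕ) (hm : 1 ≤ m) :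
    (6*m).properDivisors.erase 1 = ((6*m).divisors.erase 1).erase (6*m) := by
  ext d
  simp only [Finset.mem_erase, Nat.mem_properDivisors, Nat.mem_divisors]
  constructor
  · rintro ⟨h1, hdvd, hlt⟩
    exact ⟨by omega, h1, hdvd, by omega⟩
  · rintro ⟨hne, h1, hdvd, hne0⟩
    have := Nat.le_of_dvd (by omega) hdvd
    exact ⟨h1, hdvd, by omega⟩

lemma aux_main (m : ℕ) (hm : 2 ≤ m) (A B : Finset ℕ)
    (hU : A ∪ B = (6*m).divisors.erase 1) (hD : Disjoint A B)
    (hS : ∑ d ∈ A, d = ∑ d ∈ B, d)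
    (hσ : 3 * ∑ d ∈ (6*m).divisors, d < 60 * m)
    (hnA : 6*m ∈ A) : HalfLayered (6*m) := by
  have hm0 : 0 < m := by omega
  have hn0 : 6*m ≠ 0 := by omega
  have h1mem : (1:ℕ) ∈ (6*m).divisors := Nat.one_mem_divisors.mpr hn0
  have hsumdiv : ∑ d ∈ ((6*m).divisors).erase 1, d + 1 = ∑ d ∈ (6*m).divisors, d :=
    Finset.sum_erase_add _ _ h1mem
  have hsumU : ∑ d ∈ A ∪ B, d = ∑ d ∈ A, d + ∑ d ∈ B, d := Finset.sum_union hD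
  rw [hU] at hsumU
  have hApos : 6*m ≤ ∑ d ∈ A, d := Finset.single_le_sum (fun i _ => Nat.zero_le i) hnA
  have hnB : 6*m ∉ B := Finset.disjoint_left.mp hD hnA
  have sA : ∑ d ∈ A.erase (6*m), d + 6*m = ∑ d ∈ A, d := Finset.sum_erase_add _ _ hnA
  have mem3 : 3*m ∈ A ∪ B := by
    rw [hU]; simp only [Finset.mem_erase, Nat.mem_divisors]
    exact ⟨by omega, ⟨2, by ring⟩, hn0⟩
  have hpd := pd_erase m (by omega)
  by_cases hc : 3*m ∈ B
  · -- move 3m from B to A \ {6m}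
    have hc' : 3*m ∉ A := fun h => Finset.disjoint_left.mp hD h hc
    refine ⟨insert (3*m) (A.erase (6*m)), B.erase (3*m), ?_, ?_,
      ⟨_, Finset.mem_insert_self _ _⟩, ?_, ?_⟩
    · rw [hpd, ← hU]
      ext x
      simp only [Finset.mem_union, Finset.mem_insert, Finset.mem_erase]
      by_cases hx : x = 3*m
      · subst hx
        have h36 : 3*m ≠ 6*m := by omega
        simp [hc, h36]
      · constructor
        · rintro ((h | ⟨h1, h2⟩) | ⟨h1, h2⟩)
          · exact absurd h hx
          · exact ⟨h1, Or.inl h2⟩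
          · exact ⟨fun he => hnB (he ▸ h2), Or.inr h2⟩
        · rintro ⟨h1, (h | h)⟩
          · exact Or.inl (Or.inr ⟨h1, h⟩)
          · exact Or.inr ⟨hx, h⟩
    · rw [Finset.disjoint_left]
      rintro a ha hb
      obtain ⟨hb1, hb2⟩ := Finset.mem_erase.mp hb
      rcases Finset.mem_insert.mp ha with rfl | ha
      · exact hb1 rfl
      · exact Finset.disjoint_left.mp hD (Finset.mem_erase.mp ha).2 hb2
    · apply Finset.nonempty_of_sum_ne_zero (f := fun d => d)
      have sB : ∑ d ∈ B.erase (3*m), d + 3*m = ∑ d ∈ B, d := Finset.sum_erase_add _ _ hc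
      omega
    · have sB : ∑ d ∈ B.erase (3*m), d + 3*m = ∑ d ∈ B, d := Finset.sum_erase_add _ _ hc
      rw [Finset.sum_insert (by simp [hc'])]
      omega
  · -- 3m ∈ A; then 2m and m must be in B, else σ too big
    have hc3 : 3*m ∈ A := by
      rcases Finset.mem_union.mp mem3 with h | h
      · exact h
      · exact absurd h hc
    have mem2 : 2*m ∈ A ∪ B := by
      rw [hU]; simp only [Finset.mem_erase, Nat.mem_divisors]
      exact ⟨by omega, ⟨3, by ring⟩, hn0⟩
    have mem1 : m ∈ A ∪ B := by
      rw [hU]; simp only [Finset.mem_erase, Nat.mem_divisors]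
      exact ⟨by omega, ⟨6, by ring⟩, hn0⟩
    have h2B : 2*m ∈ B := by
      rcases Finset.mem_union.mp mem2 with h | h
      · exfalso
        have hsub : ({6*m, 3*m, 2*m} : Finset ℕ) ⊆ A := by
          intro x hx
          simp only [Finset.mem_insert, Finset.mem_singleton] at hx
          rcases hx with rfl | rfl | rfl <;> assumption
        have hle : ∑ x ∈ ({6*m, 3*m, 2*m} : Finset ℕ), x ≤ ∑ d ∈ A, d :=
          Finset.sum_le_sum_of_subset hsub
        rw [Finset.sum_insert (by simp; omega), Finset.sum_insert (by simp; omega),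
          Finset.sum_singleton] at hle
        omega
      · exact h
    have h1B : m ∈ B := by
      rcases Finset.mem_union.mp mem1 with h | h
      · exfalso
        have hsub : ({6*m, 3*m, m} : Finset ℕ) ⊆ A := by
          intro x hx
          simp only [Finset.mem_insert, Finset.mem_singleton] at hx
          rcases hx with rfl | rfl | rfl <;> assumption
        have hle : ∑ x ∈ ({6*m, 3*m, m} : Finset ℕ), x ≤ ∑ d ∈ A, d :=
          Finset.sum_le_sum_of_subset hsub
        rw [Finset.sum_insert (by simp; omega), Finset.sum_insert (by simp; omega),
          Finset.sum_singleton] at hle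
        omega
      · exact h
    have h2A : 2*m ∉ A := fun h => Finset.disjoint_left.mp hD h h2B
    have h1A : m ∉ A := fun h => Finset.disjoint_left.mp hD h h1B
    have hmem1' : m ∈ B.erase (2*m) := Finset.mem_erase.mpr ⟨by omega, h1B⟩
    have sB2 : ∑ d ∈ B.erase (2*m), d + 2*m = ∑ d ∈ B, d := Finset.sum_erase_add _ _ h2B
    have sB1 : ∑ d ∈ (B.erase (2*m)).erase m, d + m = ∑ d ∈ B.erase (2*m), d :=
      Finset.sum_erase_add _ _ hmem1'
    refine ⟨insert (2*m) (insert m (A.erase (6*m))), (B.erase (2*m)).erase m, ?_, ?_,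
      ⟨_, Finset.mem_insert_self _ _⟩, ?_, ?_⟩
    · rw [hpd, ← hU]
      ext x
      simp only [Finset.mem_union, Finset.mem_insert, Finset.mem_erase]
      by_cases hx2 : x = 2*m
      · subst hx2
        have h26 : 2*m ≠ 6*m := by omega
        simp [h2B, h26]
      · by_cases hx1 : x = m
        · rw [hx1]
          have h16 : m ≠ 6*m := by omega
          simp [h1B, h16]
        · constructor
          · rintro ((h | h | ⟨h1, h2⟩) | ⟨h1, h2, h3⟩)
            · exact absurd h hx2
            · exact absurd h hx1
            · exact ⟨h1, Or.inl h2⟩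
            · exact ⟨fun he => hnB (he ▸ h3), Or.inr h3⟩
          · rintro ⟨h1, (h | h)⟩
            · exact Or.inl (Or.inr (Or.inr ⟨h1, h⟩))
            · exact Or.inr ⟨hx1, hx2, h⟩
    · rw [Finset.disjoint_left]
      rintro a ha hb
      obtain ⟨hbm, hb'⟩ := Finset.mem_erase.mp hb
      obtain ⟨hb2m, hbB⟩ := Finset.mem_erase.mp hb'
      rcases Finset.mem_insert.mp ha with rfl | ha
      · exact hb2m rfl
      · rcases Finset.mem_insert.mp ha with rfl | ha
        · exact hbm rfl
        · exact Finset.disjoint_left.mp hD (Finset.mem_erase.mp ha).2 hbB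
    · apply Finset.nonempty_of_sum_ne_zero (f := fun d => d)
      omega
    · rw [Finset.sum_insert (by simp [h2A]; omega), Finset.sum_insert (by simp [h1A])]
      omega

/-- If `6 ∣ n`, `n` is two-layered and `σ(n) < 10n/3`, then `n` is half-layered. -/
theorem stmt_17 (n : ℕ) (hn : 0 < n) (h6 : 6 ∣ n) (h : TwoLayered n)
    (hσ : 3 * ∑ d ∈ n.divisors, d < 10 * n) :
    HalfLayered n := by
  obtain ⟨m, rfl⟩ := h6
  obtain ⟨A, B, hU, hD, hS⟩ := h
  have hm0 : 0 < m := by omega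
  have hsumU : ∑ d ∈ A ∪ B, d = ∑ d ∈ A, d + ∑ d ∈ B, d := Finset.sum_union hD
  rw [hU] at hsumU
  by_cases hm1 : m = 1
  · -- n = 6 : parity contradiction
    exfalso
    subst hm1
    have h11 : ∑ d ∈ ((6*1:ℕ).divisors).erase 1, d = 11 := by decide
    omega
  have hm2 : 2 ≤ m := by omega
  have hσ' : 3 * ∑ d ∈ (6*m).divisors, d < 60 * m := by omega
  have memn : 6*m ∈ A ∪ B := by
    rw [hU]
    simp only [Finset.mem_erase, Nat.mem_divisors]
    exact ⟨by omega, dvd_refl _, by omega⟩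
  rcases Finset.mem_union.mp memn with hnA | hnB
  · exact aux_main m hm2 A B hU hD hS hσ' hnA
  · exact aux_main m hm2 B A (by rw [Finset.union_comm]; exact hU) hD.symm hS.symm hσ' hnB
end
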